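/- arXiv:2603.27009 — 2 statements merged into one kernel-verified Lean document; each statement's English description precedes it below -/
import Mathlib

section
/- For the Hilbert metric on an open bounded convex set Ω, any three collinear points p, q, r with q strictly between p and r satisfy d_Ω(p,r) = d_Ω(p,q) + d_Ω(q,r); that is, straight line segments are geodesics in the Hilbert metric. -/
noncomputable section
open Classical

abbrev V2 := EuclideanSpace ℝ (Fin 2)

/-- The Hilbert distance on `Ω`: for distinct `p q` with chord endpoints `x`
(beyond `p`) and `y` (beyond `q`) on the frontier of `Ω`, it is
`(1/2) * log ((‖x−q‖·‖y−p‖)/(‖x−p‖·‖y−q‖))`; otherwise `0`. -/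
noncomputable def hilbertDist (Ω : Set V2) (p q : V2) : ℝ :=
  if h : ∃ x y : V2, x ∈ frontier Ω ∧ y ∈ frontier Ω ∧
      p ∈ openSegment ℝ x q ∧ q ∈ openSegment ℝ p y then
    (1/2) * Real.log ((dist h.choose q * dist h.choose_spec.choose p) /
      (dist h.choose p * dist h.choose_spec.choose q))
  else 0

/-! Parametrize the line through `p` and `r` by `t ↦ lineMap p r t`. Since `Ω` is open and
bounded, this line leaves `Ω` on both sides, at parameters `α < 0` and `β > 1`; convexity makes
these the only frontier points on the two rays, so they are the chord endpoints for every pair of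
points of the segment. The Hilbert distance between the points with parameters `s < t` is then
half the logarithm of the cross-ratio `(t - α)(β - s) / ((s - α)(β - t))`, which is
multiplicative along the line: the ratios for `(s, t)` and `(t, u)` multiply to the one for
`(s, u)`. -/

open Set AffineMap

section Order

variable {α : Type*} [ConditionallyCompleteLinearOrder α] [TopologicalSpace α] [OrderTopology α]
  [DenselyOrdered α] {U : Set α} {t : α}

theorem IsOpen.exists_gt_mem_frontier [NoMaxOrder α] (hU : IsOpen U) (hbdd : BddAbove U)
    (ht : t ∈ U) : ∃ b > t, b ∈ frontier U := by
  have hsup (s : α) (hs : s ∈ U) : ∃ b > s, b ∈ U :=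
    Filter.Eventually.exists_gt (hU.mem_nhds hs)
  obtain ⟨b, htb, hb⟩ := hsup t ht
  refine ⟨sSup U, htb.trans_le (le_csSup hbdd hb), ?_⟩
  rw [hU.frontier_eq]
  refine ⟨csSup_mem_closure ⟨t, ht⟩ hbdd, fun hmem => ?_⟩
  obtain ⟨c, hc, hcU⟩ := hsup _ hmem
  exact (le_csSup hbdd hcU).not_gt hc

theorem IsOpen.exists_lt_mem_frontier [NoMinOrder α] (hU : IsOpen U) (hbdd : BddBelow U)
    (ht : t ∈ U) : ∃ a < t, a ∈ frontier U := by
  have hinf (s : α) (hs : s ∈ U) : ∃ a < s, a ∈ U :=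
    Filter.Eventually.exists_lt (hU.mem_nhds hs)
  obtain ⟨a, hat, ha⟩ := hinf t ht
  refine ⟨sInf U, (csInf_le hbdd ha).trans_lt hat, ?_⟩
  rw [hU.frontier_eq]
  refine ⟨csInf_mem_closure ⟨t, ht⟩ hbdd, fun hmem => ?_⟩
  obtain ⟨c, hc, hcU⟩ := hinf _ hmem
  exact (csInf_le hbdd hcU).not_gt hc

end Order

section Line

variable {𝕜 E : Type*} [Field 𝕜] [LinearOrder 𝕜] [IsStrictOrderedRing 𝕜] [AddCommGroup E]
  [Module 𝕜 E]

theorem lineMap_mem_openSegment_lineMap (p r : E) {a s b : 𝕜} (has : a < s) (hsb : s < b) :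
    lineMap p r s ∈ openSegment 𝕜 (lineMap p r a) (lineMap p r b) := by
  rw [← image_openSegment, openSegment_eq_Ioo (has.trans hsb)]
  exact mem_image_of_mem _ ⟨has, hsb⟩

theorem exists_one_lt_eq_lineMap_of_mem_openSegment {p q y : E} (h : q ∈ openSegment 𝕜 p y) :
    ∃ t : 𝕜, 1 < t ∧ y = lineMap p q t := by
  obtain ⟨a, b, ha, hb, hab, rfl⟩ := h
  obtain rfl : a = 1 - b := by linarith
  refine ⟨b⁻¹, one_lt_inv_iff₀.2 ⟨hb, by linarith⟩, ?_⟩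
  rw [lineMap_apply_module]
  match_scalars <;> field_simp
  ring

end Line

section Convex

variable {E : Type*} [AddCommGroup E] [Module ℝ E] [TopologicalSpace E] [IsTopologicalAddGroup E]
  [ContinuousSMul ℝ E] {Ω : Set E}

theorem Convex.eq_of_lineMap_mem_frontier (hΩo : IsOpen Ω) (hΩc : Convex ℝ Ω) {p q : E}
    (hp : p ∈ Ω) {t t' : ℝ} (ht : 0 < t) (ht' : 0 < t') (hf : lineMap p q t ∈ frontier Ω)
    (hf' : lineMap p q t' ∈ frontier Ω) : t = t' := by
  have hnot (s : ℝ) (hs : lineMap p q s ∈ frontier Ω) : lineMap p q s ∉ Ω :=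
    (hΩo.frontier_eq ▸ hs).2
  have hmem {s s' : ℝ} (hs : 0 < s) (hss' : s < s') (hs' : lineMap p q s' ∈ frontier Ω) :
      lineMap p q s ∈ Ω := by
    have hseg := lineMap_mem_openSegment_lineMap p q hs hss'
    rw [lineMap_apply_zero] at hseg
    rw [← hΩo.interior_eq] at hp ⊢
    exact hΩc.openSegment_interior_closure_subset_interior hp (frontier_subset_closure hs') hseg
  exact le_antisymm (not_lt.1 fun h => hnot t' hf' (hmem ht' h hf))
    (not_lt.1 fun h => hnot t hf (hmem ht h hf'))

theorem Convex.eq_of_mem_frontier_of_mem_openSegment (hΩo : IsOpen Ω) (hΩc : Convex ℝ Ω)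
    {p q y y' : E} (hp : p ∈ Ω) (hy : y ∈ frontier Ω) (hy' : y' ∈ frontier Ω)
    (h : q ∈ openSegment ℝ p y) (h' : q ∈ openSegment ℝ p y') : y = y' := by
  obtain ⟨t, ht, rfl⟩ := exists_one_lt_eq_lineMap_of_mem_openSegment h
  obtain ⟨t', ht', rfl⟩ := exists_one_lt_eq_lineMap_of_mem_openSegment h'
  rw [hΩc.eq_of_lineMap_mem_frontier hΩo hp (by linarith) (by linarith) hy hy']

end Convex

section Normed

variable {E : Type*} [NormedAddCommGroup E] [NormedSpace ℝ E] {Ω : Set E}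

theorem exists_lineMap_mem_frontier (hΩo : IsOpen Ω) (hΩb : Bornology.IsBounded Ω) {p r : E}
    (hpr : p ≠ r) {t : ℝ} (ht : lineMap p r t ∈ Ω) :
    (∃ a < t, lineMap p r a ∈ frontier Ω) ∧ ∃ b > t, lineMap p r b ∈ frontier Ω := by
  have hcont : Continuous (lineMap (k := ℝ) p r) := lineMap_continuous
  have hUo : IsOpen (lineMap (k := ℝ) p r ⁻¹' Ω) := hΩo.preimage hcont
  have hUb : Bornology.IsBounded (lineMap (k := ℝ) p r ⁻¹' Ω) :=
    (antilipschitzWith_lineMap hpr).isBounded_preimage hΩb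
  obtain ⟨a, hat, ha⟩ := hUo.exists_lt_mem_frontier hUb.bddBelow ht
  obtain ⟨b, htb, hb⟩ := hUo.exists_gt_mem_frontier hUb.bddAbove ht
  exact ⟨⟨a, hat, hcont.frontier_preimage_subset Ω ha⟩,
    ⟨b, htb, hcont.frontier_preimage_subset Ω hb⟩⟩

end Normed

def chordCrossRatio (α β s t : ℝ) : ℝ := (t - α) * (β - s) / ((s - α) * (β - t))

theorem chordCrossRatio_mul {α β s t u : ℝ} (hs : α < s) (ht : α < t) (ht' : t < β)
    (hu : u < β) :
    chordCrossRatio α β s t * chordCrossRatio α β t u = chordCrossRatio α β s u := by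
  unfold chordCrossRatio
  have : s - α ≠ 0 := by linarith
  have : t - α ≠ 0 := by linarith
  have : β - t ≠ 0 := by linarith
  have : β - u ≠ 0 := by linarith
  field_simp

theorem chordCrossRatio_pos {α β s t : ℝ} (hs : α < s) (hst : s < t) (ht : t < β) :
    0 < chordCrossRatio α β s t := by
  unfold chordCrossRatio
  have : 0 < s - α := by linarith
  have : 0 < β - t := by linarith
  have : 0 < t - α := by linarith
  have : 0 < β - s := by linarith
  positivity

theorem hilbertDist_eq_of_mem_frontier {Ω : Set V2} (hΩo : IsOpen Ω) (hΩc : Convex ℝ Ω)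
    {p q x y : V2} (hp : p ∈ Ω) (hq : q ∈ Ω) (hx : x ∈ frontier Ω) (hy : y ∈ frontier Ω)
    (hpx : p ∈ openSegment ℝ x q) (hqy : q ∈ openSegment ℝ p y) :
    hilbertDist Ω p q = (1/2) * Real.log ((dist x q * dist y p) / (dist x p * dist y q)) := by
  have h : ∃ x y : V2, x ∈ frontier Ω ∧ y ∈ frontier Ω ∧
      p ∈ openSegment ℝ x q ∧ q ∈ openSegment ℝ p y := ⟨x, y, hx, hy, hpx, hqy⟩
  obtain ⟨hx', hy', hpx', hqy'⟩ := h.choose_spec.choose_spec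
  rw [openSegment_symm] at hpx hpx'
  rw [hilbertDist, dif_pos h, hΩc.eq_of_mem_frontier_of_mem_openSegment hΩo hp hy' hy hqy' hqy,
    hΩc.eq_of_mem_frontier_of_mem_openSegment hΩo hq hx' hx hpx' hpx]

theorem hilbertDist_self {Ω : Set V2} (hΩo : IsOpen Ω) {p : V2} (hp : p ∈ Ω) :
    hilbertDist Ω p p = 0 := by
  rw [hilbertDist, dif_neg]
  rintro ⟨x, -, hx, -, hpx, -⟩
  rw [right_mem_openSegment_iff] at hpx
  rw [hΩo.frontier_eq, hpx] at hx
  exact hx.2 hp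

theorem hilbertDist_lineMap {Ω : Set V2} (hΩo : IsOpen Ω) (hΩc : Convex ℝ Ω) {p r : V2}
    (hpr : p ≠ r) {α β s t : ℝ} (hαs : α < s) (hst : s < t) (htβ : t < β)
    (hα : lineMap p r α ∈ frontier Ω) (hβ : lineMap p r β ∈ frontier Ω)
    (hs : lineMap p r s ∈ Ω) (ht : lineMap p r t ∈ Ω) :
    hilbertDist Ω (lineMap p r s) (lineMap p r t) =
      (1/2) * Real.log (chordCrossRatio α β s t) := by
  rw [hilbertDist_eq_of_mem_frontier hΩo hΩc hs ht hα hβ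
    (lineMap_mem_openSegment_lineMap p r hαs hst) (lineMap_mem_openSegment_lineMap p r hst htβ)]
  simp only [dist_lineMap_lineMap, Real.dist_eq, chordCrossRatio]
  have hd : dist p r ≠ 0 := dist_ne_zero.2 hpr
  rw [abs_sub_comm α t, abs_sub_comm α s, abs_of_pos (by linarith : 0 < t - α),
    abs_of_pos (by linarith : 0 < β - s), abs_of_pos (by linarith : 0 < s - α),
    abs_of_pos (by linarith : 0 < β - t)]
  congr 2
  field_simp

/-- Straight segments are geodesics for the Hilbert metric. -/
theorem hilbertDist_add_of_between (Ω : Set V2) (hΩo : IsOpen Ω)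
    (hΩb : Bornology.IsBounded Ω) (hΩc : Convex ℝ Ω)
    (p q r : V2) (hp : p ∈ Ω) (hq : q ∈ Ω) (hr : r ∈ Ω)
    (hbtw : q ∈ openSegment ℝ p r) :
    hilbertDist Ω p r = hilbertDist Ω p q + hilbertDist Ω q r := by
  rcases eq_or_ne p r with rfl | hpr
  · obtain rfl : q = p := by simpa using hbtw
    simp [hilbertDist_self hΩo hp]
  obtain ⟨s, ⟨hs0, hs1⟩, rfl⟩ := (openSegment_eq_image_lineMap ℝ p r ▸ hbtw :)
  have hp' : lineMap p r (0 : ℝ) ∈ Ω := by simpa using hp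
  have hr' : lineMap p r (1 : ℝ) ∈ Ω := by simpa using hr
  obtain ⟨⟨α, hα0, hα⟩, -⟩ := exists_lineMap_mem_frontier hΩo hΩb hpr hp'
  obtain ⟨-, ⟨β, hβ1, hβ⟩⟩ := exists_lineMap_mem_frontier hΩo hΩb hpr hr'
  have hαs := hα0.trans hs0
  have hsβ := hs1.trans hβ1
  have hdpr := hilbertDist_lineMap hΩo hΩc hpr hα0 one_pos hβ1 hα hβ hp' hr'
  have hdpq := hilbertDist_lineMap hΩo hΩc hpr hα0 hs0 hsβ hα hβ hp' hq
  have hdqr := hilbertDist_lineMap hΩo hΩc hpr hαs hs1 hβ1 hα hβ hq hr'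
  simp only [lineMap_apply_zero, lineMap_apply_one] at hdpr hdpq hdqr
  rw [hdpr, hdpq, hdqr, ← mul_add, ← Real.log_mul (chordCrossRatio_pos hα0 hs0 hsβ).ne'
    (chordCrossRatio_pos hαs hs1 hβ1).ne', chordCrossRatio_mul hα0 hαs hsβ hβ1]
end
end

section
/- For the Funk weak metric on an open bounded convex Ω, forward balls are convex: for c ∈ Ω and r ≥ 0 the set {x ∈ Ω : F_Ω(c,x) ≤ r} is convex; indeed it equals the image of the closure of Ω under the homothety centered at c with ratio 1 − e^{−r}, intersected with Ω. -/
noncomputable section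
open Classical

/-- The Funk weak metric on `Ω`: `F_Ω(p,q) = log (‖x−p‖/‖x−q‖)` where `x` is the
point where the ray from `p` through `q` meets the frontier of `Ω`; `0` otherwise. -/
noncomputable def funkDist (Ω : Set V2) (p q : V2) : ℝ :=
  if h : ∃ x : V2, x ∈ frontier Ω ∧ q ∈ openSegment ℝ p x then
    Real.log (dist h.choose p / dist h.choose q)
  else 0

/-!
Let `p` be the Minkowski gauge of `Ω` centred at `c`: then `Ω`, `closure Ω` and `frontier Ω` are
the sets where `p(· - c)` is `< 1`, `≤ 1` and `= 1`. If the ray from `c` through `x` leaves `Ω`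
at `X`, then `x - c = p(x - c) • (X - c)`, hence
`F_Ω(c, x) = log (‖X - c‖ / ‖X - x‖) = -log (1 - p(x - c))`. So the forward ball of radius `r` is
`{p(· - c) ≤ 1 - e^{-r}} ∩ Ω`, and by homogeneity of `p` this sublevel set is the image of
`closure Ω` under the homothety of ratio `1 - e^{-r}`.
-/

open Set AffineMap Real Topology
open scoped Pointwise

lemma neg_vadd_mem_nhds_zero {E : Type*} [AddCommGroup E] [TopologicalSpace E]
    [IsTopologicalAddGroup E] {Ω : Set E} {c : E} (hΩo : IsOpen Ω) (hc : c ∈ Ω) :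
    -c +ᵥ Ω ∈ 𝓝 (0 : E) :=
  (hΩo.vadd (-c)).mem_nhds (mem_neg_vadd_set_iff.2 (by rwa [vadd_eq_add, add_zero]))

section CenteredGauge

variable {E : Type*} [NormedAddCommGroup E] [NormedSpace ℝ E] {Ω : Set E} {c x : E}

def centeredGauge (Ω : Set E) (c x : E) : ℝ := gauge (-c +ᵥ Ω) (x - c)

lemma centeredGauge_homothety {t : ℝ} (ht : 0 ≤ t) (y : E) :
    centeredGauge Ω c (homothety c t y) = t * centeredGauge Ω c y := by
  simp only [centeredGauge, homothety_apply, vsub_eq_sub, vadd_eq_add, add_sub_cancel_right,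
    gauge_smul_of_nonneg ht, smul_eq_mul]

lemma centeredGauge_lt_one_iff (hΩo : IsOpen Ω) (hΩc : Convex ℝ Ω) (hc : c ∈ Ω) :
    centeredGauge Ω c x < 1 ↔ x ∈ Ω := by
  rw [centeredGauge, gauge_lt_one_iff_mem_interior (hΩc.vadd _) (neg_vadd_mem_nhds_zero hΩo hc),
    interior_vadd, hΩo.interior_eq, mem_neg_vadd_set_iff, vadd_eq_add, add_sub_cancel]

lemma centeredGauge_le_one_iff (hΩo : IsOpen Ω) (hΩc : Convex ℝ Ω) (hc : c ∈ Ω) :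
    centeredGauge Ω c x ≤ 1 ↔ x ∈ closure Ω := by
  rw [centeredGauge, gauge_le_one_iff_mem_closure (hΩc.vadd _) (neg_vadd_mem_nhds_zero hΩo hc),
    closure_vadd, mem_neg_vadd_set_iff, vadd_eq_add, add_sub_cancel]

lemma centeredGauge_eq_one_iff (hΩo : IsOpen Ω) (hΩc : Convex ℝ Ω) (hc : c ∈ Ω) :
    centeredGauge Ω c x = 1 ↔ x ∈ frontier Ω := by
  rw [eq_iff_le_not_lt, centeredGauge_le_one_iff hΩo hΩc hc, centeredGauge_lt_one_iff hΩo hΩc hc,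
    hΩo.frontier_eq, mem_sdiff]

lemma centeredGauge_eq_zero_iff (hΩo : IsOpen Ω) (hΩb : Bornology.IsBounded Ω) (hc : c ∈ Ω) :
    centeredGauge Ω c x = 0 ↔ x = c := by
  rw [centeredGauge, gauge_eq_zero (absorbent_nhds_zero (neg_vadd_mem_nhds_zero hΩo hc))
    ((NormedSpace.isVonNBounded_iff ℝ).2 (hΩb.vadd _)), sub_eq_zero]

lemma image_homothety_closure_eq (hΩo : IsOpen Ω) (hΩb : Bornology.IsBounded Ω)
    (hΩc : Convex ℝ Ω) (hc : c ∈ Ω) {t : ℝ} (ht : 0 ≤ t) :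
    homothety c t '' closure Ω = {x | centeredGauge Ω c x ≤ t} := by
  ext x
  constructor
  · rintro ⟨y, hy, rfl⟩
    rw [mem_ofPred_eq, centeredGauge_homothety ht, ← centeredGauge_le_one_iff hΩo hΩc hc] at *
    exact mul_le_of_le_one_right ht hy
  · intro hx
    rcases ht.eq_or_lt with rfl | ht
    · have hxc : x = c := (centeredGauge_eq_zero_iff hΩo hΩb hc).1 (le_antisymm hx (gauge_nonneg _))
      exact ⟨c, subset_closure hc, by rw [hxc, homothety_apply_same]⟩
    · refine ⟨homothety c t⁻¹ x, ?_, ?_⟩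
      · rw [← centeredGauge_le_one_iff hΩo hΩc hc, centeredGauge_homothety (inv_nonneg.2 ht.le),
          inv_mul_le_one₀ ht]
        exact hx
      · rw [← homothety_mul_apply, mul_inv_cancel₀ ht.ne', homothety_one, coe_id, id_eq]

end CenteredGauge

lemma Real.neg_log_one_sub_le_iff {t r : ℝ} (ht : t < 1) :
    -log (1 - t) ≤ r ↔ t ≤ 1 - exp (-r) := by
  rw [neg_le, le_log_iff_exp_le (sub_pos.2 ht), le_sub_comm]

lemma funkDist_eq_neg_log_one_sub_centeredGauge {Ω : Set V2} (hΩo : IsOpen Ω) (hΩc : Convex ℝ Ω)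
    {c x : V2} (hc : c ∈ Ω) (hx : x ∈ Ω) :
    funkDist Ω c x = -log (1 - centeredGauge Ω c x) := by
  unfold funkDist
  split_ifs with hexit
  · obtain ⟨hX, hxX⟩ := hexit.choose_spec
    set X := hexit.choose
    rw [openSegment_eq_image_lineMap] at hxX
    obtain ⟨b, ⟨hb0, hb1⟩, hxb⟩ := hxX
    have hgauge : centeredGauge Ω c x = b := by
      rw [← hxb, ← homothety_eq_lineMap, centeredGauge_homothety hb0.le,
        (centeredGauge_eq_one_iff hΩo hΩc hc).2 hX, mul_one]
    have hdist : dist X x = (1 - b) * dist c X := by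
      rw [← hxb, dist_comm, dist_lineMap_right, norm_of_nonneg (sub_nonneg.2 hb1.le)]
    have hXc : dist c X ≠ 0 := dist_ne_zero.2 fun h => (hΩo.frontier_eq ▸ hX).2 (h ▸ hc)
    rw [hgauge, hdist, dist_comm X, div_mul_cancel_right₀ hXc, log_inv]
  · suffices centeredGauge Ω c x = 0 by rw [this, sub_zero, log_one, neg_zero]
    by_contra hg
    have hpos : 0 < centeredGauge Ω c x := (gauge_nonneg _).lt_of_ne' hg
    refine hexit ⟨homothety c (centeredGauge Ω c x)⁻¹ x, ?_, ?_⟩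
    · rw [← centeredGauge_eq_one_iff hΩo hΩc hc, centeredGauge_homothety (inv_nonneg.2 hpos.le),
        inv_mul_cancel₀ hg]
    · rw [openSegment_eq_image_lineMap]
      refine ⟨centeredGauge Ω c x, ⟨hpos, (centeredGauge_lt_one_iff hΩo hΩc hc).2 hx⟩, ?_⟩
      rw [← homothety_eq_lineMap, ← homothety_mul_apply, mul_inv_cancel₀ hg, homothety_one,
        coe_id, id_eq]

/-- Forward Funk balls are convex; indeed they are the image of the closure of `Ω` under
the homothety of center `c` and ratio `1 - e^{-r}`, intersected with `Ω`. -/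
theorem funk_forward_ball_convex (Ω : Set V2) (hΩo : IsOpen Ω)
    (hΩb : Bornology.IsBounded Ω) (hΩc : Convex ℝ Ω)
    (c : V2) (hc : c ∈ Ω) (r : ℝ) (hr : 0 ≤ r) :
    Convex ℝ {x ∈ Ω | funkDist Ω c x ≤ r} ∧
    {x ∈ Ω | funkDist Ω c x ≤ r} =
      ((fun y => c + (1 - Real.exp (-r)) • (y - c)) '' closure Ω) ∩ Ω := by
  set s := 1 - exp (-r)
  have hs : 0 ≤ s := sub_nonneg.2 (exp_le_one_iff.2 (neg_nonpos.2 hr))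
  have hmap : (fun y => c + s • (y - c)) = homothety c s := by
    funext y
    rw [homothety_apply, vsub_eq_sub, vadd_eq_add, add_comm]
  have hball : {x ∈ Ω | funkDist Ω c x ≤ r} = homothety c s '' closure Ω ∩ Ω := by
    ext x
    rw [image_homothety_closure_eq hΩo hΩb hΩc hc hs, mem_sep_iff, mem_inter_iff, and_comm]
    refine and_congr_left fun hx => ?_
    rw [mem_ofPred_eq, funkDist_eq_neg_log_one_sub_centeredGauge hΩo hΩc hc hx,
      neg_log_one_sub_le_iff ((centeredGauge_lt_one_iff hΩo hΩc hc).2 hx)]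
  rw [hmap, hball]
  exact ⟨(hΩc.closure.affine_image _).inter hΩc, rfl⟩
end
end
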